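/- Let X := {2^{2^k} : k ∈ ℕ, k ≥ 1} ⊆ ℝ, let ρ(x,y) := |x−y| for x,y ∈ X, and let μ := Σ_{k=1}^∞ 2^k·δ_{2^{2^k}} (that is, μ({2^{2^k}}) = 2^k for every k ≥ 1). Then (X,ρ,μ) is a space of homogeneous type; more precisely, for every x ∈ X and every r ∈ (0,∞), 0 < μ(B(x,2r)) ≤ 4·μ(B(x,r)) < ∞, where B(x,r) := {y ∈ X : |x−y| < r}. -/

import Mathlib

/-!
The atoms `x_j = 2^{2^{j+1}}` satisfy `x_{j+1} = x_j²`, and their weights `2^{j+1}` grow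
geometrically, so the mass of a ball around `x_k` is at most twice the weight of the largest
atom `x_m` it contains. If `x_m ∈ B(x_k, 2r)` with `m > k`, then `x_m = x_{m-1}²` forces
`x_{m-1} ∈ B(x_k, r)`, whose weight `2^m` is a quarter of `2^{m+2}`.
-/

noncomputable section

open MeasureTheory Filter Set
open scoped ENNReal NNReal Topology

namespace Paper

/-- The measure `μ = Σ_{k ≥ 1} 2^k δ_{2^{2^k}}` on `ℝ` (indexed below by `k+1`, `k : ℕ`). -/
def μX : Measure ℝ :=
  Measure.sum fun k : ℕ => ((2 : ℝ≥0∞) ^ (k + 1)) • Measure.dirac ((2 : ℝ) ^ 2 ^ (k + 1))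

def atom (j : ℕ) : ℝ := 2 ^ 2 ^ (j + 1)

lemma atom_strictMono : StrictMono atom := fun _ _ h =>
  pow_lt_pow_right₀ one_lt_two (Nat.pow_lt_pow_right one_lt_two (by omega))

lemma two_le_atom (j : ℕ) : 2 ≤ atom j :=
  le_self_pow₀ one_le_two (by positivity)

lemma atom_succ (j : ℕ) : atom (j + 1) = atom j ^ 2 := by
  rw [atom, atom, pow_succ 2 (j + 1), pow_mul]

lemma natCast_lt_atom (j : ℕ) : (j : ℝ) < atom j := by
  have h : j < 2 ^ 2 ^ (j + 1) :=
    Nat.lt_two_pow_self.trans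
      (Nat.pow_lt_pow_right one_lt_two ((Nat.lt_succ_self j).trans Nat.lt_two_pow_self))
  rw [atom]
  exact_mod_cast h

lemma μX_apply (s : Set ℝ) : μX s = ∑' j, 2 ^ (j + 1) * s.indicator 1 (atom j) := by
  simp [μX, Measure.sum_apply_of_countable, Measure.dirac_apply, atom]

lemma μX_singleton_atom (k : ℕ) : μX {atom k} = 2 ^ (k + 1) := by
  rw [μX_apply, tsum_eq_single k fun j hj => by simp [atom_strictMono.injective.ne hj]]
  simp

lemma two_pow_le_μX {s : Set ℝ} {n : ℕ} (hn : atom n ∈ s) : 2 ^ (n + 1) ≤ μX s := by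
  rw [μX_apply]
  calc (2 : ℝ≥0∞) ^ (n + 1) = 2 ^ (n + 1) * s.indicator 1 (atom n) := by
        rw [Set.indicator_of_mem hn, Pi.one_apply, mul_one]
    _ ≤ _ := ENNReal.le_tsum n

lemma sum_range_two_pow_succ_le (m : ℕ) :
    ∑ j ∈ Finset.range (m + 1), (2 : ℝ≥0∞) ^ (j + 1) ≤ 2 ^ (m + 2) := by
  induction m with
  | zero => norm_num
  | succ n ih =>
    rw [Finset.sum_range_succ]
    calc _ ≤ (2 : ℝ≥0∞) ^ (n + 2) + 2 ^ (n + 2) := by gcongr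
      _ = 2 ^ (n + 1 + 2) := by ring

lemma μX_le_two_pow {s : Set ℝ} {m : ℕ} (hs : ∀ j, atom j ∈ s → j ≤ m) :
    μX s ≤ 2 ^ (m + 2) := by
  rw [μX_apply, tsum_eq_sum (s := Finset.range (m + 1)) fun j hj => by
    have : atom j ∉ s := fun h => hj (Finset.mem_range.2 (Nat.lt_succ_of_le (hs j h)))
    simp [this]]
  refine le_trans (Finset.sum_le_sum fun j _ => ?_) (sum_range_two_pow_succ_le m)
  exact mul_le_of_le_one_right' (Set.indicator_le_self' (fun _ _ => zero_le_one) _)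

lemma exists_max_index_mem_ball (k : ℕ) {R : ℝ} (hR : 0 < R) :
    ∃ m, k ≤ m ∧ atom m ∈ Metric.ball (atom k) R ∧
      ∀ j, atom j ∈ Metric.ball (atom k) R → j ≤ m := by
  classical
  have hbdd : ∀ j, atom j ∈ Metric.ball (atom k) R → j ≤ ⌈atom k + R⌉₊ := fun j hj => by
    rw [Metric.mem_ball, Real.dist_eq, abs_lt] at hj
    exact_mod_cast (natCast_lt_atom j).le.trans ((by linarith : atom j ≤ atom k + R).trans
      (Nat.le_ceil _))
  have hk : atom k ∈ Metric.ball (atom k) R := Metric.mem_ball_self hR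
  exact ⟨Nat.findGreatest (fun j => atom j ∈ Metric.ball (atom k) R) ⌈atom k + R⌉₊,
    Nat.le_findGreatest (hbdd k hk) hk,
    Nat.findGreatest_spec (P := fun j => atom j ∈ Metric.ball (atom k) R) (hbdd k hk) hk,
    fun j hj => Nat.le_findGreatest (hbdd j hj) hj⟩

lemma atom_mem_ball_of_succ_mem_ball_two_mul {k n : ℕ} {r : ℝ} (hkn : k ≤ n)
    (h : atom (n + 1) ∈ Metric.ball (atom k) (2 * r)) : atom n ∈ Metric.ball (atom k) r := by
  have hle : atom k ≤ atom n := atom_strictMono.monotone hkn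
  have h2 := two_le_atom n
  have h0 := two_le_atom k
  rw [atom_succ] at h
  rw [Metric.mem_ball, Real.dist_eq, abs_lt] at h ⊢
  constructor <;> nlinarith

lemma two_pow_le_μX_ball {k m : ℕ} {r : ℝ} (hr : 0 < r) (hkm : k ≤ m)
    (hm : atom m ∈ Metric.ball (atom k) (2 * r)) : 2 ^ m ≤ μX (Metric.ball (atom k) r) := by
  rcases hkm.eq_or_lt with rfl | hkm
  · exact (pow_le_pow_right₀ one_le_two (Nat.le_succ k)).trans
      (two_pow_le_μX (Metric.mem_ball_self hr))
  · obtain ⟨n, rfl⟩ : ∃ n, m = n + 1 := ⟨m - 1, by omega⟩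
    exact two_pow_le_μX (atom_mem_ball_of_succ_mem_ball_two_mul (by omega) hm)

lemma μX_ball_two_mul_le (k : ℕ) {r : ℝ} (hr : 0 < r) :
    μX (Metric.ball (atom k) (2 * r)) ≤ 4 * μX (Metric.ball (atom k) r) := by
  obtain ⟨m, hkm, hm, hmax⟩ := exists_max_index_mem_ball k (by positivity : 0 < 2 * r)
  calc μX (Metric.ball (atom k) (2 * r)) ≤ 2 ^ (m + 2) := μX_le_two_pow hmax
    _ = 4 * 2 ^ m := by ring
    _ ≤ 4 * μX (Metric.ball (atom k) r) := by gcongr; exact two_pow_le_μX_ball hr hkm hm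

lemma μX_ball_lt_top (k : ℕ) {R : ℝ} (hR : 0 < R) : μX (Metric.ball (atom k) R) < ∞ := by
  obtain ⟨m, -, -, hmax⟩ := exists_max_index_mem_ball k hR
  exact (μX_le_two_pow hmax).trans_lt (ENNReal.pow_lt_top ENNReal.ofNat_lt_top)

theorem statement8 :
    (∀ k : ℕ, μX {(2 : ℝ) ^ 2 ^ (k + 1)} = 2 ^ (k + 1)) ∧
    ∀ (k : ℕ) (r : ℝ), 0 < r →
      0 < μX (Metric.ball ((2 : ℝ) ^ 2 ^ (k + 1)) (2 * r)) ∧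
      μX (Metric.ball ((2 : ℝ) ^ 2 ^ (k + 1)) (2 * r)) ≤
        4 * μX (Metric.ball ((2 : ℝ) ^ 2 ^ (k + 1)) r) ∧
      μX (Metric.ball ((2 : ℝ) ^ 2 ^ (k + 1)) r) < ∞ := by
  refine ⟨μX_singleton_atom, fun k r hr => ⟨?_, μX_ball_two_mul_le k hr, μX_ball_lt_top k hr⟩⟩
  exact (by positivity : (0 : ℝ≥0∞) < 2 ^ (k + 1)).trans_le
    (two_pow_le_μX (Metric.mem_ball_self (by positivity)))
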